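/- arXiv:1809.02741 — 3 statements merged into one kernel-verified Lean document; each statement's English description precedes it below -/
import Mathlib

section
/- Derivative bounds for the smoothed-maximum composition: Let d ≥ 2, δ̄ > 0, β := (log d)/δ̄, and F_β(v) := β^{-1}·log(Σ_{j=1}^d exp(β v_j)) for v ∈ ℝ^d. Let g: ℝ → ℝ be three times differentiable with ‖g'‖_∞ ≤ δ̄^{-1}, ‖g''‖_∞ ≤ K·δ̄^{-2}, and ‖g'''‖_∞ ≤ K·δ̄^{-3} for some constant K. Then the composition φ := g ∘ F_β satisfies sup_{v∈ℝ^d} Σ_{j,k=1}^d |∂_j∂_k φ(v)| ≤ C·(log d)/δ̄² and sup_{v∈ℝ^d} Σ_{j,k,ℓ=1}^d |∂_j∂_k∂_ℓ φ(v)| ≤ C·(log d)²/δ̄³, where C depends only on K. -/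
open scoped BigOperators

/-- Second-order partial derivative `∂_j ∂_k φ (v)` of `φ : ℝ^d → ℝ`. -/
noncomputable def partial2 {d : ℕ} (φ : (Fin d → ℝ) → ℝ) (j k : Fin d)
    (v : Fin d → ℝ) : ℝ :=
  iteratedFDeriv ℝ 2 φ v ![Pi.single j 1, Pi.single k 1]

/-- Third-order partial derivative `∂_j ∂_k ∂_ℓ φ (v)` of `φ : ℝ^d → ℝ`. -/
noncomputable def partial3 {d : ℕ} (φ : (Fin d → ℝ) → ℝ) (j k l : Fin d)
    (v : Fin d → ℝ) : ℝ :=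
  iteratedFDeriv ℝ 3 φ v ![Pi.single j 1, Pi.single k 1, Pi.single l 1]

/-! With `π = softmax β`, the partial derivatives of `F_β = logSumExp β` are `∂_j F_β = π_j`
and `∂_j π_k = β π_k (δ_jk - π_j)`, so every derivative of `g ∘ F_β` is a sum of terms
`g⁽ⁿ⁾(F_β)` times products of the `π`'s and their derivatives. Because `π` is a probability
vector, `Σ_{j,k} |∂_j π_k| ≤ 2β` and `Σ_{i,j,k} |∂_i ∂_j π_k| ≤ 6β²`, whence
`Σ |∂²(g ∘ F_β)| ≤ ‖g''‖ + 2β ‖g'‖` and `Σ |∂³(g ∘ F_β)| ≤ ‖g'''‖ + 6β ‖g''‖ + 6β² ‖g'‖`.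
With `β = log d / δ̄` and `log d ≥ log 2 > 1/2` both are of the claimed order. -/

open Finset Real

section PartialDeriv

variable {ι : Type*} [DecidableEq ι]

noncomputable def partialDeriv (j : ι) (f : (ι → ℝ) → ℝ) (w : ι → ℝ) : ℝ :=
  fderiv ℝ f w (Pi.single j 1)

variable {f g : (ι → ℝ) → ℝ} {w : ι → ℝ}

theorem HasFDerivAt.partialDeriv_eq {f' : (ι → ℝ) →L[ℝ] ℝ} (hf : HasFDerivAt f f' w) (j : ι) :
    partialDeriv j f w = f' (Pi.single j 1) := by
  rw [partialDeriv, hf.fderiv]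

variable [Fintype ι]

theorem partialDeriv_add (hf : DifferentiableAt ℝ f w) (hg : DifferentiableAt ℝ g w) (j : ι) :
    partialDeriv j (fun w => f w + g w) w = partialDeriv j f w + partialDeriv j g w :=
  (hf.hasFDerivAt.add hg.hasFDerivAt).partialDeriv_eq j

theorem partialDeriv_mul (hf : DifferentiableAt ℝ f w) (hg : DifferentiableAt ℝ g w) (j : ι) :
    partialDeriv j (fun w => f w * g w) w =
      partialDeriv j f w * g w + f w * partialDeriv j g w := by
  rw [(hf.hasFDerivAt.fun_mul hg.hasFDerivAt).partialDeriv_eq j]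
  simp only [add_apply, smul_apply, smul_eq_mul, partialDeriv]
  ring

theorem partialDeriv_const_mul (hf : DifferentiableAt ℝ f w) (c : ℝ) (j : ι) :
    partialDeriv j (fun w => c * f w) w = c * partialDeriv j f w :=
  (hf.hasFDerivAt.const_mul c).partialDeriv_eq j

theorem partialDeriv_const_sub (c : ℝ) (j : ι) :
    partialDeriv j (fun w => c - f w) w = -partialDeriv j f w := by
  simp [partialDeriv, fderiv_const_sub]

theorem partialDeriv_comp {h : ℝ → ℝ} (hh : DifferentiableAt ℝ h (f w))
    (hf : DifferentiableAt ℝ f w) (j : ι) :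
    partialDeriv j (fun w => h (f w)) w = deriv h (f w) * partialDeriv j f w :=
  (hh.hasDerivAt.comp_hasFDerivAt w hf.hasFDerivAt).partialDeriv_eq j

theorem partialDeriv_sum {α : Type*} {s : Finset α} {f : α → (ι → ℝ) → ℝ}
    (hf : ∀ i ∈ s, DifferentiableAt ℝ (f i) w) (j : ι) :
    partialDeriv j (fun w => ∑ i ∈ s, f i w) w = ∑ i ∈ s, partialDeriv j (f i) w := by
  rw [(HasFDerivAt.fun_sum fun i hi => (hf i hi).hasFDerivAt).partialDeriv_eq j]
  simp [partialDeriv]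

end PartialDeriv

theorem partial2_eq_partialDeriv {d : ℕ} {φ : (Fin d → ℝ) → ℝ} (hφ : ContDiff ℝ 2 φ)
    (j k : Fin d) (v : Fin d → ℝ) :
    partial2 φ j k v = partialDeriv j (partialDeriv k φ) v := by
  rw [partial2,
    (hφ.differentiable_iteratedFDeriv (m := 1) (by norm_num) v).iteratedFDeriv_succ_apply_left']
  simp [iteratedFDeriv_one_apply]
  rfl

theorem partial3_eq_partialDeriv {d : ℕ} {φ : (Fin d → ℝ) → ℝ} (hφ : ContDiff ℝ 3 φ)
    (j k l : Fin d) (v : Fin d → ℝ) :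
    partial3 φ j k l v = partialDeriv j (partialDeriv k (partialDeriv l φ)) v := by
  rw [partial3,
    (hφ.differentiable_iteratedFDeriv (m := 2) (by norm_num) v).iteratedFDeriv_succ_apply_left']
  congr 2 with y
  rw [← partial2_eq_partialDeriv (hφ.of_le (by norm_num))]
  rfl

section Softmax

variable {ι : Type*} [Fintype ι] (β : ℝ)

noncomputable def softmax (k : ι) (w : ι → ℝ) : ℝ := exp (β * w k) / ∑ i, exp (β * w i)

noncomputable def logSumExp (w : ι → ℝ) : ℝ := β⁻¹ * log (∑ i, exp (β * w i))

variable {β}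

theorem partialDeriv_exp_mul_apply [DecidableEq ι] {w : ι → ℝ} (j k : ι) :
    partialDeriv j (fun w : ι → ℝ => exp (β * w k)) w =
      if j = k then β * exp (β * w k) else 0 := by
  have hlin : HasFDerivAt (fun w : ι → ℝ => β * w k)
      (β • ContinuousLinearMap.proj (R := ℝ) (φ := fun _ : ι => ℝ) k) w :=
    (hasFDerivAt_apply k w).const_mul β
  rw [partialDeriv_comp differentiableAt_exp hlin.differentiableAt, hlin.partialDeriv_eq,
    Real.deriv_exp]
  by_cases h : j = k
  · subst h; simp; ring
  · simp [h, Ne.symm h]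

theorem partialDeriv_sum_exp_mul [DecidableEq ι] {w : ι → ℝ} (j : ι) :
    partialDeriv j (fun w : ι → ℝ => ∑ i, exp (β * w i)) w = β * exp (β * w j) := by
  rw [partialDeriv_sum (fun i _ => by fun_prop)]
  simp [partialDeriv_exp_mul_apply]

variable [Nonempty ι]

theorem sum_exp_mul_pos (w : ι → ℝ) : 0 < ∑ i, exp (β * w i) :=
  sum_pos (fun _ _ => exp_pos _) univ_nonempty

theorem softmax_nonneg (β : ℝ) (k : ι) (w : ι → ℝ) : 0 ≤ softmax β k w :=
  div_nonneg (exp_pos _).le (sum_exp_mul_pos w).le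

theorem sum_softmax (w : ι → ℝ) : ∑ k, softmax β k w = 1 := by
  simp only [softmax, ← sum_div]
  exact div_self (sum_exp_mul_pos w).ne'

theorem differentiable_softmax (k : ι) : Differentiable ℝ (softmax β k) :=
  (ContDiff.div (n := 1) (by fun_prop) (by fun_prop) fun w =>
    (sum_exp_mul_pos w).ne').differentiable one_ne_zero

theorem contDiff_logSumExp {n : WithTop ℕ∞} : ContDiff ℝ n (logSumExp (ι := ι) β) :=
  contDiff_const.mul <| ContDiff.log (by fun_prop) fun w => (sum_exp_mul_pos w).ne'

theorem differentiable_logSumExp : Differentiable ℝ (logSumExp (ι := ι) β) :=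
  contDiff_logSumExp.differentiable one_ne_zero

variable [DecidableEq ι] {w : ι → ℝ}

theorem partialDeriv_logSumExp (hβ : β ≠ 0) (j : ι) :
    partialDeriv j (logSumExp β) w = softmax β j w := by
  have hS := (sum_exp_mul_pos (β := β) w).ne'
  unfold logSumExp
  rw [partialDeriv_const_mul (by fun_prop (disch := exact hS)),
    partialDeriv_comp (h := log) (f := fun w => ∑ i, exp (β * w i)) (differentiableAt_log hS)
      (by fun_prop),
    partialDeriv_sum_exp_mul, deriv_log, softmax]
  field_simp

theorem partialDeriv_softmax (j k : ι) :
    partialDeriv j (softmax β k) w =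
      β * softmax β k w * ((if j = k then 1 else 0) - softmax β j w) := by
  have hS := (sum_exp_mul_pos (β := β) w).ne'
  show partialDeriv j (fun w : ι → ℝ => exp (β * w k) / ∑ i, exp (β * w i)) w = _
  simp only [div_eq_mul_inv]
  rw [partialDeriv_mul (by fun_prop) (by fun_prop),
    partialDeriv_comp (h := fun x : ℝ => x⁻¹) (f := fun w => ∑ i, exp (β * w i))
      (differentiableAt_inv hS) (by fun_prop),
    partialDeriv_exp_mul_apply, partialDeriv_sum_exp_mul, deriv_inv]
  simp only [softmax]
  split_ifs <;> field_simp <;> ring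

theorem differentiable_partialDeriv_softmax (j k : ι) :
    Differentiable ℝ (partialDeriv j (softmax β k)) := by
  rw [show partialDeriv j (softmax β k) = _ from funext fun w => partialDeriv_softmax j k]
  exact ((differentiable_softmax k).const_mul β).mul ((differentiable_softmax j).const_sub _)

theorem partialDeriv_partialDeriv_softmax (i j k : ι) :
    partialDeriv i (partialDeriv j (softmax β k)) w =
      β * (partialDeriv i (softmax β k) w * ((if j = k then 1 else 0) - softmax β j w)
        - softmax β k w * partialDeriv i (softmax β j) w) := by
  rw [show partialDeriv j (softmax β k) = _ from funext fun w => partialDeriv_softmax j k,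
    partialDeriv_mul (((differentiable_softmax k).const_mul β) w)
      (((differentiable_softmax j).const_sub _) w),
    partialDeriv_const_mul (differentiable_softmax k w), partialDeriv_const_sub]
  ring

end Softmax

section SoftmaxBounds

variable {ι : Type*} [Fintype ι] [DecidableEq ι]

theorem sum_abs_ite_sub_le_two {p : ι → ℝ} (hp : ∀ i, 0 ≤ p i) (hp₁ : ∑ i, p i = 1) (k : ι) :
    ∑ j, |(if j = k then 1 else 0) - p j| ≤ 2 :=
  calc ∑ j, |(if j = k then 1 else 0) - p j| ≤ ∑ j, ((if j = k then 1 else 0) + p j) :=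
        sum_le_sum fun j _ => (abs_sub _ _).trans <| by
          rw [abs_of_nonneg (hp j), abs_of_nonneg (by split_ifs <;> norm_num)]
    _ = 2 := by rw [sum_add_distrib, sum_ite_eq', hp₁]; norm_num

variable [Nonempty ι] {β : ℝ}

theorem sum_abs_partialDeriv_softmax_le (hβ : 0 ≤ β) (w : ι → ℝ) (k : ι) :
    ∑ j, |partialDeriv j (softmax β k) w| ≤ 2 * β * softmax β k w := by
  simp only [partialDeriv_softmax, abs_mul, abs_of_nonneg hβ,
    abs_of_nonneg (softmax_nonneg β k w), ← mul_sum]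
  exact (mul_le_mul_of_nonneg_left
    (sum_abs_ite_sub_le_two (softmax_nonneg β · w) (sum_softmax w) k)
    (mul_nonneg hβ (softmax_nonneg β k w))).trans_eq (by ring)

theorem sum_sum_abs_partialDeriv_softmax_le (hβ : 0 ≤ β) (w : ι → ℝ) :
    ∑ j, ∑ k, |partialDeriv j (softmax β k) w| ≤ 2 * β :=
  calc ∑ j, ∑ k, |partialDeriv j (softmax β k) w|
      ≤ ∑ k, 2 * β * softmax β k w := by
        rw [sum_comm]; exact sum_le_sum fun k _ => sum_abs_partialDeriv_softmax_le hβ w k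
    _ = 2 * β := by rw [← mul_sum, sum_softmax, mul_one]

theorem sum_sum_sum_abs_partialDeriv_partialDeriv_softmax_le (hβ : 0 ≤ β) (w : ι → ℝ) :
    ∑ i, ∑ j, ∑ k, |partialDeriv i (partialDeriv j (softmax β k)) w| ≤ 6 * β ^ 2 := by
  set a : ι → ι → ℝ := fun i k => |partialDeriv i (softmax β k) w|
  set b : ι → ι → ℝ := fun j k => |(if j = k then 1 else 0) - softmax β j w|
  have hpointwise (i j k : ι) : |partialDeriv i (partialDeriv j (softmax β k)) w| ≤
      β * (a i k * b j k + softmax β k w * a i j) := by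
    rw [partialDeriv_partialDeriv_softmax, abs_mul, abs_of_nonneg hβ]
    refine mul_le_mul_of_nonneg_left ((abs_sub _ _).trans_eq ?_) hβ
    rw [abs_mul, abs_mul, abs_of_nonneg (softmax_nonneg β k w)]
  have hfirst : ∑ i, ∑ j, ∑ k, a i k * b j k ≤ 2 * β * 2 :=
    calc ∑ i, ∑ j, ∑ k, a i k * b j k = ∑ i, ∑ k, a i k * ∑ j, b j k := by
          simp only [mul_sum]; exact sum_congr rfl fun i _ => sum_comm
      _ ≤ ∑ i, ∑ k, a i k * 2 := by
          gcongr with i _ k _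
          exact sum_abs_ite_sub_le_two (softmax_nonneg β · w) (sum_softmax w) k
      _ = (∑ i, ∑ k, a i k) * 2 := by simp only [sum_mul]
      _ ≤ 2 * β * 2 := by gcongr; exact sum_sum_abs_partialDeriv_softmax_le hβ w
  have hsecond : ∑ i, ∑ j, ∑ k, softmax β k w * a i j = ∑ i, ∑ j, a i j := by
    simp only [← sum_mul, sum_softmax, one_mul]
  calc ∑ i, ∑ j, ∑ k, |partialDeriv i (partialDeriv j (softmax β k)) w|
      ≤ ∑ i, ∑ j, ∑ k, β * (a i k * b j k + softmax β k w * a i j) := by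
        gcongr with i _ j _ k _; exact hpointwise i j k
    _ = β * (∑ i, ∑ j, ∑ k, a i k * b j k + ∑ i, ∑ j, ∑ k, softmax β k w * a i j) := by
        simp only [← mul_sum, ← sum_add_distrib]
    _ ≤ β * (2 * β * 2 + 2 * β) := by
        rw [hsecond]; gcongr; exact sum_sum_abs_partialDeriv_softmax_le hβ w
    _ = 6 * β ^ 2 := by ring

end SoftmaxBounds

section Composition

variable {ι : Type*} [Fintype ι] [Nonempty ι] {β : ℝ} {g : ℝ → ℝ}

theorem differentiable_iteratedDeriv_comp_logSumExp {m : ℕ} (hg : ContDiff ℝ m g) {n : ℕ}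
    (hn : n < m) : Differentiable ℝ (fun w : ι → ℝ => iteratedDeriv n g (logSumExp β w)) :=
  (hg.differentiable_iteratedDeriv n (mod_cast hn)).comp differentiable_logSumExp

variable [DecidableEq ι]

theorem partialDeriv_iteratedDeriv_comp_logSumExp (hβ : β ≠ 0) {n : ℕ}
    (hg : Differentiable ℝ (iteratedDeriv n g)) (j : ι) (w : ι → ℝ) :
    partialDeriv j (fun w => iteratedDeriv n g (logSumExp β w)) w =
      iteratedDeriv (n + 1) g (logSumExp β w) * softmax β j w := by
  rw [partialDeriv_comp (hg _) (differentiable_logSumExp w),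
    iteratedDeriv_succ, partialDeriv_logSumExp hβ]

theorem partialDeriv_comp_logSumExp (hβ : β ≠ 0) (hg : Differentiable ℝ g) (l : ι) :
    partialDeriv l (fun w => g (logSumExp β w)) =
      fun w => iteratedDeriv 1 g (logSumExp β w) * softmax β l w := by
  funext w
  simpa only [iteratedDeriv_zero] using
    partialDeriv_iteratedDeriv_comp_logSumExp hβ (n := 0) (by rwa [iteratedDeriv_zero]) l w

theorem partialDeriv_partialDeriv_comp_logSumExp (hβ : β ≠ 0) (hg : ContDiff ℝ 2 g) (k l : ι) :
    partialDeriv k (partialDeriv l (fun w => g (logSumExp β w))) =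
      fun w => iteratedDeriv 2 g (logSumExp β w) * softmax β k w * softmax β l w
        + iteratedDeriv 1 g (logSumExp β w) * partialDeriv k (softmax β l) w := by
  funext w
  rw [partialDeriv_comp_logSumExp hβ (hg.differentiable two_ne_zero),
    partialDeriv_mul (differentiable_iteratedDeriv_comp_logSumExp hg one_lt_two w)
      (differentiable_softmax l w),
    partialDeriv_iteratedDeriv_comp_logSumExp hβ
      (hg.differentiable_iteratedDeriv 1 (by norm_num))]

theorem partialDeriv_partialDeriv_partialDeriv_comp_logSumExp (hβ : β ≠ 0) (hg : ContDiff ℝ 3 g)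
    (j k l : ι) (w : ι → ℝ) :
    partialDeriv j (partialDeriv k (partialDeriv l (fun w => g (logSumExp β w)))) w =
      iteratedDeriv 3 g (logSumExp β w) * softmax β j w * softmax β k w * softmax β l w
        + iteratedDeriv 2 g (logSumExp β w) *
          (partialDeriv j (softmax β k) w * softmax β l w
            + softmax β k w * partialDeriv j (softmax β l) w
            + softmax β j w * partialDeriv k (softmax β l) w)
        + iteratedDeriv 1 g (logSumExp β w) * partialDeriv j (partialDeriv k (softmax β l)) w := by
  have hg₁ := differentiable_iteratedDeriv_comp_logSumExp (ι := ι) (β := β) hg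
    (n := 1) (by norm_num) w
  have hg₂ := differentiable_iteratedDeriv_comp_logSumExp (ι := ι) (β := β) hg
    (n := 2) (by norm_num) w
  rw [partialDeriv_partialDeriv_comp_logSumExp hβ (hg.of_le (by norm_num)),
    partialDeriv_add
      ((hg₂.fun_mul (differentiable_softmax k w)).fun_mul (differentiable_softmax l w))
      (hg₁.fun_mul (differentiable_partialDeriv_softmax k l w)),
    partialDeriv_mul (hg₂.fun_mul (differentiable_softmax k w)) (differentiable_softmax l w),
    partialDeriv_mul hg₂ (differentiable_softmax k w),
    partialDeriv_mul hg₁ (differentiable_partialDeriv_softmax k l w),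
    partialDeriv_iteratedDeriv_comp_logSumExp hβ
      (hg.differentiable_iteratedDeriv 2 (by norm_num)),
    partialDeriv_iteratedDeriv_comp_logSumExp hβ
      (hg.differentiable_iteratedDeriv 1 (by norm_num))]
  ring

end Composition

section Bounds

variable {d : ℕ} [NeZero d] {β : ℝ} {g : ℝ → ℝ} {M₁ M₂ M₃ : ℝ}

theorem sum_abs_partial2_comp_logSumExp_le (hβ : 0 < β) (hg : ContDiff ℝ 2 g)
    (hg₁ : ∀ x, |iteratedDeriv 1 g x| ≤ M₁) (hg₂ : ∀ x, |iteratedDeriv 2 g x| ≤ M₂)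
    (v : Fin d → ℝ) :
    ∑ j, ∑ k, |partial2 (fun w => g (logSumExp β w)) j k v| ≤ M₂ + 2 * β * M₁ := by
  have hM₁ : 0 ≤ M₁ := (abs_nonneg _).trans (hg₁ 0)
  set p := fun k => softmax β k v with hp
  calc ∑ j, ∑ k, |partial2 (fun w => g (logSumExp β w)) j k v|
      ≤ ∑ j, ∑ k, (M₂ * (p j * p k) + M₁ * |partialDeriv j (softmax β k) v|) := by
        gcongr with j _ k _
        rw [partial2_eq_partialDeriv (φ := fun w => g (logSumExp β w))
            (hg.comp contDiff_logSumExp),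
          partialDeriv_partialDeriv_comp_logSumExp hβ.ne' hg]
        refine (abs_add_le _ _).trans (add_le_add ?_ ?_)
        · have hpp := mul_nonneg (softmax_nonneg β j v) (softmax_nonneg β k v)
          rw [mul_assoc, abs_mul, abs_of_nonneg hpp]
          exact mul_le_mul_of_nonneg_right (hg₂ _) hpp
        · rw [abs_mul]; gcongr; exact hg₁ _
    _ = M₂ + M₁ * ∑ j, ∑ k, |partialDeriv j (softmax β k) v| := by
        simp only [sum_add_distrib, ← mul_sum, hp, sum_softmax, mul_one]
    _ ≤ M₂ + 2 * β * M₁ := by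
        have := sum_sum_abs_partialDeriv_softmax_le hβ.le v
        nlinarith

theorem sum_abs_partial3_comp_logSumExp_le (hβ : 0 < β) (hg : ContDiff ℝ 3 g)
    (hg₁ : ∀ x, |iteratedDeriv 1 g x| ≤ M₁) (hg₂ : ∀ x, |iteratedDeriv 2 g x| ≤ M₂)
    (hg₃ : ∀ x, |iteratedDeriv 3 g x| ≤ M₃) (v : Fin d → ℝ) :
    ∑ j, ∑ k, ∑ l, |partial3 (fun w => g (logSumExp β w)) j k l v|
      ≤ M₃ + 6 * β * M₂ + 6 * β ^ 2 * M₁ := by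
  have hM₁ : 0 ≤ M₁ := (abs_nonneg _).trans (hg₁ 0)
  have hM₂ : 0 ≤ M₂ := (abs_nonneg _).trans (hg₂ 0)
  set p := fun k => softmax β k v with hp
  have hp₀ (k : Fin d) : 0 ≤ p k := softmax_nonneg β k v
  set a := fun j k => |partialDeriv j (softmax β k) v|
  calc ∑ j, ∑ k, ∑ l, |partial3 (fun w => g (logSumExp β w)) j k l v|
      ≤ ∑ j, ∑ k, ∑ l, (M₃ * (p j * (p k * p l))
          + M₂ * (a j k * p l + p k * a j l + p j * a k l)
          + M₁ * |partialDeriv j (partialDeriv k (softmax β l)) v|) := by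
        gcongr with j _ k _ l _
        rw [partial3_eq_partialDeriv (φ := fun w => g (logSumExp β w))
            (hg.comp contDiff_logSumExp),
          partialDeriv_partialDeriv_partialDeriv_comp_logSumExp hβ.ne' hg]
        refine (abs_add_le _ _).trans
          (add_le_add ((abs_add_le _ _).trans (add_le_add ?_ ?_)) ?_)
        · have hppp : 0 ≤ p j * (p k * p l) := mul_nonneg (hp₀ j) (mul_nonneg (hp₀ k) (hp₀ l))
          rw [mul_assoc, mul_assoc, abs_mul, abs_of_nonneg hppp]
          exact mul_le_mul_of_nonneg_right (hg₃ _) hppp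
        · rw [abs_mul]
          refine mul_le_mul (hg₂ _) ?_ (abs_nonneg _) hM₂
          refine (abs_add_le _ _).trans
            (add_le_add ((abs_add_le _ _).trans (add_le_add ?_ ?_)) ?_)
          all_goals rw [abs_mul]
          · rw [abs_of_nonneg (hp₀ l)]
          · rw [abs_of_nonneg (hp₀ k)]
          · rw [abs_of_nonneg (hp₀ j)]
        · rw [abs_mul]; gcongr; exact hg₁ _
    _ = M₃ + M₂ * (3 * ∑ j, ∑ k, a j k)
          + M₁ * ∑ j, ∑ k, ∑ l, |partialDeriv j (partialDeriv k (softmax β l)) v| := by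
        simp only [sum_add_distrib, ← mul_sum, ← sum_mul, hp, sum_softmax, mul_one, one_mul]
        ring
    _ ≤ M₃ + 6 * β * M₂ + 6 * β ^ 2 * M₁ := by
        have h₁ := sum_sum_abs_partialDeriv_softmax_le hβ.le v
        have h₂ := sum_sum_sum_abs_partialDeriv_partialDeriv_softmax_le hβ.le v
        nlinarith

end Bounds

/-- **Derivative bounds for the smoothed-maximum composition.**
Let `d ≥ 2`, `δ̄ > 0`, `β := (log d)/δ̄` and let
`F_β(v) := β⁻¹ log (Σ_j exp (β v_j))` be the log-sum-exp approximation of the maximum.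
If `g : ℝ → ℝ` is three times differentiable with `‖g'‖_∞ ≤ δ̄⁻¹`,
`‖g''‖_∞ ≤ K δ̄⁻²` and `‖g'''‖_∞ ≤ K δ̄⁻³`, then `φ := g ∘ F_β` satisfies
`Σ_{j,k} |∂_j∂_k φ(v)| ≤ C (log d)/δ̄²` and
`Σ_{j,k,ℓ} |∂_j∂_k∂_ℓ φ(v)| ≤ C (log d)²/δ̄³` for all `v`, where `C` depends
only on `K`. -/
theorem lse_composition_derivative_bounds (K : ℝ) (hK : 0 ≤ K) :
    ∃ C : ℝ, 0 < C ∧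
      ∀ (d : ℕ), 2 ≤ d →
      ∀ (δb : ℝ), 0 < δb →
      ∀ g : ℝ → ℝ, ContDiff ℝ 3 g →
        (∀ x, |iteratedDeriv 1 g x| ≤ δb⁻¹) →
        (∀ x, |iteratedDeriv 2 g x| ≤ K / δb ^ 2) →
        (∀ x, |iteratedDeriv 3 g x| ≤ K / δb ^ 3) →
        ∀ v : Fin d → ℝ,
          (∑ j, ∑ k, |partial2
              (fun w : Fin d → ℝ => g ((Real.log d / δb)⁻¹
                * Real.log (∑ i, Real.exp ((Real.log d / δb) * w i)))) j k v|
            ≤ C * Real.log d / δb ^ 2) ∧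
          (∑ j, ∑ k, ∑ l, |partial3
              (fun w : Fin d → ℝ => g ((Real.log d / δb)⁻¹
                * Real.log (∑ i, Real.exp ((Real.log d / δb) * w i)))) j k l v|
            ≤ C * (Real.log d) ^ 2 / δb ^ 3) := by
  refine ⟨16 * K + 6, by positivity, fun d hd δb hδb g hg h₁ h₂ h₃ v => ?_⟩
  have : NeZero d := ⟨by omega⟩
  set L := Real.log d
  have hL : 1 / 2 ≤ L := (show (1 : ℝ) / 2 ≤ log 2 by linarith [log_two_gt_d9]).trans
    (log_le_log two_pos (by exact_mod_cast hd))
  have hβ : 0 < L / δb := by positivity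
  constructor
  · calc _ ≤ K / δb ^ 2 + 2 * (L / δb) * δb⁻¹ :=
          sum_abs_partial2_comp_logSumExp_le hβ (hg.of_le (by norm_num)) h₁ h₂ v
      _ = (K + 2 * L) / δb ^ 2 := by field_simp
      _ ≤ (16 * K + 6) * L / δb ^ 2 := by gcongr; nlinarith
  · calc _ ≤ K / δb ^ 3 + 6 * (L / δb) * (K / δb ^ 2) + 6 * (L / δb) ^ 2 * δb⁻¹ :=
          sum_abs_partial3_comp_logSumExp_le hβ hg h₁ h₂ h₃ v
      _ = (K + 6 * K * L + 6 * L ^ 2) / δb ^ 3 := by field_simp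
      _ ≤ (16 * K + 6) * L ^ 2 / δb ^ 3 := by
          gcongr
          nlinarith [mul_nonneg (mul_nonneg hK (by linarith : 0 ≤ 8 * L + 1))
            (by linarith : 0 ≤ 2 * L - 1)]
end

section
/- Norm contraction of the path-lifting operator (Lemma 4.3): Let T be a finite complete tree of strings over the finite alphabet A, with leaf set Leaves(T), and let π: T → (0,1] be given by π(w) = P(X^{-1}_{−|w|} = w) for a stationary process (X_k); in particular π(y) = Σ_{w ∈ Leaves(T), w ⪰ y} π(w) for every y ∈ T, and π(x) ≥ π(y) whenever x ⪯ y. Define the linear map S: ℝ^{Leaves(T)} → ℝ^T by S e_w := Σ_{x ∈ Path_T(w)} √(π(w)/π(x))·e_x, where Path_T(w) := { x ∈ T : x ⪯ w }, and extend S to ℝ^{Leaves(T)} ⊗ ℝ^A by tensoring with the identity on ℝ^A. Then for any two block-diagonal matrices Q := Σ_{w∈Leaves(T)} e_w e_w' ⊗ Q_w and Q̃ := Σ_{w∈Leaves(T)} e_w e_w' ⊗ Q̃_w with Q_w, Q̃_w ∈ ℝ^{A×A}, one has ‖S(Q − Q̃)S'‖_∞ ≤ max_{w∈Leaves(T)}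 ‖Q_w − Q̃_w‖_∞, where ‖·‖_∞ denotes the entrywise maximum-absolute-value norm on matrices. -/
/-!
The `(x, a), (y, b)` entry of `S D S'` is `∑_w k_w(x, y) D_w(a, b)` with nonnegative weights
`k_w(x, y) = √(π w / π x) √(π w / π y)` (`pathWeight`) over the leaves `w` above both `x`
and `y`. These weights vanish unless `x` and `y` are comparable, and if `x ⪯ y` the leaves
above both are those above `y`, so the weights sum to `π y / √(π x π y) = √(π y / π x) ≤ 1`.
The entry is therefore a sub-convex combination of entries of the blocks `D_w`.
-/

open Matrix
open scoped BigOperators Classical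

/- Strings over the alphabet `A` are represented as lists with the most recent symbol
first, so the suffix order `⪯` of the paper is the prefix order `<+:` on lists;
the parent of a nonempty string is `dropLast`. -/

def IsTreeOfStrings {A : Type*} (T : Finset (List A)) : Prop :=
  ∀ w ∈ T, w ≠ ([] : List A) → w.dropLast ∈ T

def IsCompleteTree {A : Type*} [Fintype A] (T : Finset (List A)) : Prop :=
  ∀ w ∈ T, (∀ a : A, w ++ [a] ∉ T) ∨ (∀ a : A, w ++ [a] ∈ T)

def IsLeafOf {A : Type*} (T : Finset (List A)) (w : List A) : Prop :=
  w ∈ T ∧ ∀ a : A, w ++ [a] ∉ T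

/-- The path-lifting operator `S : ℝ^{Leaves(T)} → ℝ^T`, tensored with the identity on
`ℝ^A`, viewed as a matrix: `S e_w := Σ_{x ∈ Path_T(w)} √(π(w)/π(x)) e_x`. -/
noncomputable def pathLift {A : Type*} [Fintype A] (T Lv : Finset (List A))
    (π : List A → ℝ) :
    Matrix ({w // w ∈ T} × A) ({w // w ∈ Lv} × A) ℝ :=
  fun p q =>
    if (p.1 : List A) <+: (q.1 : List A) ∧ p.2 = q.2 then
      Real.sqrt (π q.1 / π p.1) else 0

/-- A block-diagonal matrix `Σ_{w ∈ Leaves(T)} e_w e_w' ⊗ Q_w` on `ℝ^{Leaves(T)} ⊗ ℝ^A`. -/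
noncomputable def blockDiag {A : Type*} [Fintype A] (Lv : Finset (List A))
    (Q : List A → Matrix A A ℝ) :
    Matrix ({w // w ∈ Lv} × A) ({w // w ∈ Lv} × A) ℝ :=
  fun p q => if p.1 = q.1 then Q p.1 p.2 q.2 else 0

section

variable {A : Type*}

noncomputable def pathWeight (π : List A → ℝ) (x y w : List A) : ℝ :=
  if x <+: w ∧ y <+: w then √(π w / π x) * √(π w / π y) else 0

section pathWeight

variable {π : List A → ℝ} {x y w : List A}

lemma pathWeight_nonneg : 0 ≤ pathWeight π x y w := by
  unfold pathWeight
  split_ifs <;> positivity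

lemma pathWeight_comm : pathWeight π x y w = pathWeight π y x w := by
  simp only [pathWeight, and_comm, mul_comm]

lemma pathWeight_eq_zero_of_not_prefix (hxy : ¬x <+: y) (hyx : ¬y <+: x) :
    pathWeight π x y w = 0 :=
  if_neg fun ⟨hx, hy⟩ => (List.prefix_or_prefix_of_prefix hx hy).elim hxy hyx

lemma pathWeight_of_prefix [DecidableEq A] (hxy : x <+: y) (hw : 0 ≤ π w) :
    pathWeight π x y w = (if y <+: w then π w else 0) / (√(π x) * √(π y)) := by
  by_cases hyw : y <+: w
  · rw [pathWeight, if_pos ⟨hxy.trans hyw, hyw⟩, if_pos hyw, Real.sqrt_div hw,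
      Real.sqrt_div hw, div_mul_div_comm, Real.mul_self_sqrt hw]
  · rw [pathWeight, if_neg fun h => hyw h.2, if_neg hyw, zero_div]

end pathWeight

section sumPathWeight

variable [DecidableEq A] {T Lv : Finset (List A)} {π : List A → ℝ}

lemma sum_pathWeight_le_one_of_prefix (hLv : ∀ w ∈ Lv, 0 ≤ π w)
    (hdecomp : ∀ y ∈ T, π y = ∑ w ∈ Lv with y <+: w, π w)
    (hmono : ∀ x ∈ T, ∀ y ∈ T, x <+: y → π y ≤ π x)
    {x y : List A} (hx : x ∈ T) (hy : y ∈ T) (hxy : x <+: y) :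
    ∑ w ∈ Lv, pathWeight π x y w ≤ 1 := by
  have hπy : 0 ≤ π y :=
    hdecomp y hy ▸ Finset.sum_nonneg fun w hw => hLv w (Finset.mem_filter.1 hw).1
  have hsum : ∑ w ∈ Lv, pathWeight π x y w = π y / (√(π x) * √(π y)) := by
    rw [Finset.sum_congr rfl fun w hw => pathWeight_of_prefix hxy (hLv w hw), ← Finset.sum_div,
      ← Finset.sum_filter, ← hdecomp y hy]
  rw [hsum]
  refine div_le_one_of_le₀ ?_ (by positivity)
  calc π y = √(π y) * √(π y) := (Real.mul_self_sqrt hπy).symm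
    _ ≤ √(π x) * √(π y) := by gcongr; exact hmono x hx y hy hxy

lemma sum_pathWeight_le_one (hLv : ∀ w ∈ Lv, 0 ≤ π w)
    (hdecomp : ∀ y ∈ T, π y = ∑ w ∈ Lv with y <+: w, π w)
    (hmono : ∀ x ∈ T, ∀ y ∈ T, x <+: y → π y ≤ π x)
    {x y : List A} (hx : x ∈ T) (hy : y ∈ T) :
    ∑ w ∈ Lv, pathWeight π x y w ≤ 1 := by
  by_cases hxy : x <+: y
  · exact sum_pathWeight_le_one_of_prefix hLv hdecomp hmono hx hy hxy
  by_cases hyx : y <+: x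
  · simp only [pathWeight_comm (x := x)]
    exact sum_pathWeight_le_one_of_prefix hLv hdecomp hmono hy hx hyx
  · simp [pathWeight_eq_zero_of_not_prefix hxy hyx]

end sumPathWeight

lemma blockDiag_sub_blockDiag [Fintype A] (Lv : Finset (List A))
    (Q Qt : List A → Matrix A A ℝ) :
    _root_.blockDiag Lv Q - _root_.blockDiag Lv Qt = _root_.blockDiag Lv (Q - Qt) := by
  ext p q
  simp only [Matrix.sub_apply, _root_.blockDiag]
  split_ifs <;> simp

lemma pathLift_mul_blockDiag_mul_transpose_apply [Fintype A] (T Lv : Finset (List A))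
    (π : List A → ℝ) (D : List A → Matrix A A ℝ) (p q : {w // w ∈ T} × A) :
    (pathLift T Lv π * _root_.blockDiag Lv D * (pathLift T Lv π)ᵀ) p q
      = ∑ w : {w // w ∈ Lv}, pathWeight π p.1 q.1 w * D w p.2 q.2 := by
  simp only [mul_apply, transpose_apply, pathLift, _root_.blockDiag, pathWeight,
    Fintype.sum_prod_type, ite_and, ite_mul, zero_mul, mul_ite, mul_zero]
  refine Finset.sum_congr rfl fun w _ => ?_
  by_cases h1 : (q.1 : List A) <+: (w : List A) <;>
    by_cases h2 : (p.1 : List A) <+: (w : List A) <;>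
      simp [h1, h2, mul_comm, mul_assoc]

lemma abs_sum_mul_le_of_sum_le_one {ι : Type*} {s : Finset ι} {c d : ι → ℝ} {M : ℝ}
    (hc : ∀ i ∈ s, 0 ≤ c i) (hsum : ∑ i ∈ s, c i ≤ 1) (hd : ∀ i ∈ s, |d i| ≤ M)
    (hM : 0 ≤ M) : |∑ i ∈ s, c i * d i| ≤ M :=
  calc |∑ i ∈ s, c i * d i| ≤ ∑ i ∈ s, c i * M := by
        refine (Finset.abs_sum_le_sum_abs _ _).trans (Finset.sum_le_sum fun i hi => ?_)
        rw [abs_mul, abs_of_nonneg (hc i hi)]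
        exact mul_le_mul_of_nonneg_left (hd i hi) (hc i hi)
    _ = (∑ i ∈ s, c i) * M := (Finset.sum_mul _ _ _).symm
    _ ≤ 1 * M := mul_le_mul_of_nonneg_right hsum hM
    _ = M := one_mul M

lemma abs_apply_le_iSup_iSup {ι : Type*} [Finite ι] [Finite A] (D : ι → Matrix A A ℝ)
    (i : ι) (a b : A) : |D i a b| ≤ ⨆ i, ⨆ ab : A × A, |D i ab.1 ab.2| :=
  le_ciSup_of_le (Set.finite_range _).bddAbove i
    (le_ciSup (f := fun ab : A × A => |D i ab.1 ab.2|) (Set.finite_range _).bddAbove (a, b))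

end

theorem pathLift_norm_contraction_general
    {A : Type*} [Fintype A] [DecidableEq A]
    (T : Finset (List A))
    (π : List A → ℝ)
    (hπpos : ∀ w ∈ T, 0 < π w)
    (hπdecomp : ∀ y ∈ T,
      π y = ∑ w ∈ T.filter (fun w => IsLeafOf T w ∧ y <+: w), π w)
    (hπmono : ∀ x ∈ T, ∀ y ∈ T, x <+: y → π y ≤ π x)
    (Q Qt : List A → Matrix A A ℝ) :
    (⨆ p : {w // w ∈ T} × A, ⨆ q : {w // w ∈ T} × A,
        |(pathLift T (T.filter (fun w => IsLeafOf T w)) π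
            * (blockDiag (T.filter (fun w => IsLeafOf T w)) Q
                - blockDiag (T.filter (fun w => IsLeafOf T w)) Qt)
            * (pathLift T (T.filter (fun w => IsLeafOf T w)) π)ᵀ) p q|)
      ≤ ⨆ w : {w // w ∈ T.filter (fun w => IsLeafOf T w)},
          ⨆ ab : A × A, |(Q w - Qt w) ab.1 ab.2| := by
  set Lv := T.filter (fun w => IsLeafOf T w)
  have hLv : ∀ w ∈ Lv, 0 ≤ π w := fun w hw => (hπpos w (Finset.mem_filter.1 hw).1).le
  have hdecomp : ∀ y ∈ T, π y = ∑ w ∈ Lv with y <+: w, π w := by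
    simpa only [Lv, Finset.filter_filter] using hπdecomp
  have hM : 0 ≤ ⨆ w : {w // w ∈ Lv}, ⨆ ab : A × A, |(Q w - Qt w) ab.1 ab.2| :=
    Real.iSup_nonneg fun _ => Real.iSup_nonneg fun _ => abs_nonneg _
  refine Real.iSup_le (fun p => Real.iSup_le (fun q => ?_) hM) hM
  rw [blockDiag_sub_blockDiag, pathLift_mul_blockDiag_mul_transpose_apply]
  refine abs_sum_mul_le_of_sum_le_one (fun _ _ => pathWeight_nonneg) ?_
    (fun w _ => abs_apply_le_iSup_iSup (fun w : {w // w ∈ Lv} => Q w - Qt w) w _ _) hM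
  rw [Finset.sum_coe_sort Lv (pathWeight π p.1 q.1)]
  exact sum_pathWeight_le_one hLv hdecomp hπmono p.1.2 q.1.2

/-- **Norm contraction of the path-lifting operator (Lemma 4.3).**
For block-diagonal `Q, Q̃` over the leaves of a finite complete tree `T`,
`‖S (Q − Q̃) S'‖_∞ ≤ max_{w ∈ Leaves(T)} ‖Q_w − Q̃_w‖_∞`, where `‖·‖_∞` is the
entrywise maximum-absolute-value norm. -/
theorem pathLift_norm_contraction
    {A : Type*} [Fintype A] [DecidableEq A] [Nonempty A]
    (T : Finset (List A)) (hroot : ([] : List A) ∈ T)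
    (htree : IsTreeOfStrings T) (hcomplete : IsCompleteTree T)
    (π : List A → ℝ)
    (hπpos : ∀ w ∈ T, 0 < π w) (hπle1 : ∀ w ∈ T, π w ≤ 1)
    (hπdecomp : ∀ y ∈ T,
      π y = ∑ w ∈ T.filter (fun w => IsLeafOf T w ∧ y <+: w), π w)
    (hπmono : ∀ x ∈ T, ∀ y ∈ T, x <+: y → π y ≤ π x)
    (Q Qt : List A → Matrix A A ℝ) :
    (⨆ p : {w // w ∈ T} × A, ⨆ q : {w // w ∈ T} × A,
        |(pathLift T (T.filter (fun w => IsLeafOf T w)) π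
            * (blockDiag (T.filter (fun w => IsLeafOf T w)) Q
                - blockDiag (T.filter (fun w => IsLeafOf T w)) Qt)
            * (pathLift T (T.filter (fun w => IsLeafOf T w)) π)ᵀ) p q|)
      ≤ ⨆ w : {w // w ∈ T.filter (fun w => IsLeafOf T w)},
          ⨆ ab : A × A, |(Q w - Qt w) ab.1 ab.2| :=
  pathLift_norm_contraction_general T π hπpos hπdecomp hπmono Q Qt
end

section
/- Comparison of multinomial covariance matrices (Lemma F.1): Let A be a finite set and let p, q ∈ ℝ^A be probability vectors (nonnegative entries summing to 1). Then, in the positive semidefinite order, diag(p) − p·p' ⪯ diag(q) − q·q' + (2√|A| + 1)·max_{a∈A} |p(a) − q(a)|·I_{A×A}. -/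
/-!
Split the difference of the two sides as
`(diag q − diag p + ε I) + (p pᵀ − q qᵀ + 2√|A| ε I)` with `ε = maxₐ |p a − q a|`.
The first summand is a diagonal matrix with nonnegative entries. For the second, the quadratic
form is `(p·x)² − (q·x)² + 2√|A| ε ‖x‖²`; by Cauchy–Schwarz `(p·x)², (q·x)² ≤ ‖x‖²` (since
`∑ pₐ² ≤ ∑ pₐ = 1`) and `((p − q)·x)² ≤ |A| ε² ‖x‖²`, so
`|(q·x)² − (p·x)²| = |(p − q)·x| |(p + q)·x| ≤ √|A| ε ‖x‖ · 2‖x‖`.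
-/

open Matrix

lemma sq_sub_sq_le_of_sq_le {a b s k : ℝ} (ha : a ^ 2 ≤ s) (hb : b ^ 2 ≤ s)
    (hab : (a - b) ^ 2 ≤ k ^ 2 * s) (hk : 0 ≤ k) : b ^ 2 - a ^ 2 ≤ 2 * k * s := by
  have hs : 0 ≤ s := (sq_nonneg a).trans ha
  have hsum : (a + b) ^ 2 ≤ 4 * s := by nlinarith [sq_nonneg (a - b)]
  have hsq : (b ^ 2 - a ^ 2) ^ 2 ≤ (2 * k * s) ^ 2 :=
    calc (b ^ 2 - a ^ 2) ^ 2 = (a - b) ^ 2 * (a + b) ^ 2 := by ring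
      _ ≤ k ^ 2 * s * (4 * s) := by gcongr
      _ = (2 * k * s) ^ 2 := by ring
  exact (abs_le_of_sq_le_sq' hsq (by positivity)).2

section DotProduct

variable {ι : Type*} [Fintype ι]

lemma sq_dotProduct_le_dotProduct_self_of_sum_eq_one {v : ι → ℝ} (hv0 : ∀ i, 0 ≤ v i)
    (hv1 : ∑ i, v i = 1) (x : ι → ℝ) : (v ⬝ᵥ x) ^ 2 ≤ x ⬝ᵥ x := by
  have hv_sq : ∑ i, v i ^ 2 ≤ 1 := by
    rw [← hv1]
    refine Finset.sum_le_sum fun i _ ↦ ?_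
    have : v i ≤ 1 := hv1 ▸ Finset.single_le_sum (fun j _ ↦ hv0 j) (Finset.mem_univ i)
    nlinarith [hv0 i]
  calc (v ⬝ᵥ x) ^ 2 ≤ (∑ i, v i ^ 2) * ∑ i, x i ^ 2 := Finset.sum_mul_sq_le_sq_mul_sq _ _ _
    _ ≤ 1 * ∑ i, x i ^ 2 := by gcongr
    _ = x ⬝ᵥ x := by simp [dotProduct, sq]

lemma sq_dotProduct_le_card_mul_sq_mul_dotProduct_self {d : ι → ℝ} {ε : ℝ}
    (hd : ∀ i, |d i| ≤ ε) (x : ι → ℝ) :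
    (d ⬝ᵥ x) ^ 2 ≤ Fintype.card ι * ε ^ 2 * (x ⬝ᵥ x) := by
  have hd_sq : ∑ i, d i ^ 2 ≤ Fintype.card ι * ε ^ 2 := by
    simpa using Finset.sum_le_sum fun i (_ : i ∈ Finset.univ) ↦
      sq_le_sq.mpr ((hd i).trans (le_abs_self ε))
  calc (d ⬝ᵥ x) ^ 2 ≤ (∑ i, d i ^ 2) * ∑ i, x i ^ 2 := Finset.sum_mul_sq_le_sq_mul_sq _ _ _
    _ ≤ Fintype.card ι * ε ^ 2 * ∑ i, x i ^ 2 := by gcongr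
    _ = Fintype.card ι * ε ^ 2 * (x ⬝ᵥ x) := by simp [dotProduct, sq]

lemma sq_dotProduct_sub_sq_dotProduct_le {p q : ι → ℝ}
    (hp0 : ∀ i, 0 ≤ p i) (hq0 : ∀ i, 0 ≤ q i) (hp1 : ∑ i, p i = 1) (hq1 : ∑ i, q i = 1)
    {ε : ℝ} (hε : ∀ i, |p i - q i| ≤ ε) (hε0 : 0 ≤ ε) (x : ι → ℝ) :
    (q ⬝ᵥ x) ^ 2 - (p ⬝ᵥ x) ^ 2 ≤ 2 * (√(Fintype.card ι) * ε) * (x ⬝ᵥ x) := by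
  refine sq_sub_sq_le_of_sq_le (sq_dotProduct_le_dotProduct_self_of_sum_eq_one hp0 hp1 x)
    (sq_dotProduct_le_dotProduct_self_of_sum_eq_one hq0 hq1 x) ?_ (by positivity)
  rw [mul_pow, Real.sq_sqrt (Nat.cast_nonneg _), ← sub_dotProduct]
  exact sq_dotProduct_le_card_mul_sq_mul_dotProduct_self hε x

lemma Matrix.posSemidef_vecMulVec_sub_vecMulVec_add_smul_one [DecidableEq ι]
    {u v : ι → ℝ} {c : ℝ} (h : ∀ x, (v ⬝ᵥ x) ^ 2 - (u ⬝ᵥ x) ^ 2 ≤ c * (x ⬝ᵥ x)) :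
    (vecMulVec u u - vecMulVec v v + c • 1).PosSemidef := by
  have hherm (w : ι → ℝ) : (vecMulVec w w).IsHermitian := by
    simpa using (posSemidef_vecMulVec_self_star w).isHermitian
  have hquad (w x : ι → ℝ) : x ⬝ᵥ (vecMulVec w w *ᵥ x) = (w ⬝ᵥ x) ^ 2 := by
    simp [vecMulVec_mulVec, dotProduct_comm, sq]
  refine .of_dotProduct_mulVec_nonneg
    (((hherm u).sub (hherm v)).add (isHermitian_one.smul (IsSelfAdjoint.all c))) fun x ↦ ?_
  simp only [star_trivial, add_mulVec, sub_mulVec, dotProduct_add, dotProduct_sub, hquad,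
    smul_mulVec, one_mulVec, dotProduct_smul, smul_eq_mul]
  linarith [h x]

end DotProduct

theorem multinomial_covariance_comparison_general
    {A : Type*} [Fintype A] [DecidableEq A]
    (p q : A → ℝ)
    (hp0 : ∀ a, 0 ≤ p a) (hq0 : ∀ a, 0 ≤ q a)
    (hp1 : ∑ a, p a = 1) (hq1 : ∑ a, q a = 1) :
    (Matrix.diagonal q - Matrix.vecMulVec q q
        + ((2 * Real.sqrt (Fintype.card A) + 1)
            * (⨆ a : A, |p a - q a|)) • (1 : Matrix A A ℝ)
      - (Matrix.diagonal p - Matrix.vecMulVec p p)).PosSemidef := by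
  set ε := ⨆ a : A, |p a - q a|
  have hε (a : A) : |p a - q a| ≤ ε :=
    le_ciSup (Set.finite_range fun a ↦ |p a - q a|).bddAbove a
  have hε0 : 0 ≤ ε := Real.iSup_nonneg fun a ↦ abs_nonneg _
  have hdiag : (diagonal q - diagonal p + ε • 1).PosSemidef := by
    rw [diagonal_sub, smul_one_eq_diagonal, diagonal_add, posSemidef_diagonal_iff]
    exact fun a ↦ by linarith [(abs_le.mp (hε a)).2]
  have hrank_two := posSemidef_vecMulVec_sub_vecMulVec_add_smul_one
    (sq_dotProduct_sub_sq_dotProduct_le hp0 hq0 hp1 hq1 hε hε0)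
  convert hdiag.add hrank_two using 1
  module

/-- **Comparison of multinomial covariance matrices (Lemma F.1).**
Let `A` be a finite set and `p, q ∈ ℝ^A` probability vectors. Then, in the positive
semidefinite order,
`diag p − p pᵀ ⪯ diag q − q qᵀ + (2√|A| + 1) · max_a |p a − q a| · I`. -/
theorem multinomial_covariance_comparison
    {A : Type*} [Fintype A] [DecidableEq A] [Nonempty A]
    (p q : A → ℝ)
    (hp0 : ∀ a, 0 ≤ p a) (hq0 : ∀ a, 0 ≤ q a)
    (hp1 : ∑ a, p a = 1) (hq1 : ∑ a, q a = 1) :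
    (Matrix.diagonal q - Matrix.vecMulVec q q
        + ((2 * Real.sqrt (Fintype.card A) + 1)
            * (⨆ a : A, |p a - q a|)) • (1 : Matrix A A ℝ)
      - (Matrix.diagonal p - Matrix.vecMulVec p p)).PosSemidef :=
  multinomial_covariance_comparison_general p q hp0 hq0 hp1 hq1
end
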